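/- Suppose that a group G is weakly hyperbolic relative to the collection of subgroups {A, B, C₁, …, Cₘ}, where A and B are conjugate subgroups of G (i.e. B = gAg⁻¹ for some g ∈ G). Then G is weakly hyperbolic relative to {A, C₁, …, Cₘ}. -/

import Mathlib

/-- The Cayley graph of a group `G` with respect to a set `S` of generators: two distinct
elements `a b : G` are adjacent iff they differ by right multiplication by an element of
`S` or the inverse of an element of `S`. -/
def cayleyGraph (G : Type*) [Group G] (S : Set G) : SimpleGraph G where
  Adj a b := a ≠ b ∧ (a⁻¹ * b ∈ S ∨ b⁻¹ * a ∈ S)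
  symm := by
    constructor
    rintro a b ⟨hne, h⟩
    exact ⟨hne.symm, h.symm⟩
  loopless := by constructor; rintro a ⟨hne, -⟩; exact hne rfl

/-- A walk in a graph is a (discrete) geodesic if its length equals the combinatorial
distance between its endpoints. -/
def SimpleGraph.IsGeodesic {V : Type*} (Γ : SimpleGraph V) {u v : V} (p : Γ.Walk u v) : Prop :=
  p.length = Γ.dist u v

/-- A graph is hyperbolic (as a geodesic metric space, with the combinatorial metric in
which every edge has length `1`) iff there is `δ ≥ 0` such that each side of every
geodesic triangle is contained in the closed `δ`-neighbourhood of the union of the other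
two sides. -/
def SimpleGraph.IsHyperbolic {V : Type*} (Γ : SimpleGraph V) : Prop :=
  ∃ δ : ℕ, ∀ (u v w : V) (p : Γ.Walk u v) (q : Γ.Walk v w) (r : Γ.Walk u w),
    Γ.IsGeodesic p → Γ.IsGeodesic q → Γ.IsGeodesic r →
    ∀ x ∈ r.support, ∃ y, (y ∈ p.support ∨ y ∈ q.support) ∧ Γ.dist x y ≤ δ

/-- `X ⊆ G` is a relative generating set of `G` with respect to the collection of
subgroups `H i`, i.e. `G` is generated by `X` together with all the `H i`. -/
def IsRelGenSet {G : Type*} [Group G] {ι : Type*} (H : ι → Subgroup G) (X : Set G) : Prop :=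
  Subgroup.closure (X ∪ ⋃ i, (H i : Set G)) = ⊤

/-- The relative Cayley graph of `G` with respect to the collection of subgroups `H i`
and the set `X`: the Cayley graph of `G` with respect to the generating set
`X ∪ ⋃ i, H i`. -/
def relCayleyGraph (G : Type*) [Group G] {ι : Type*} (H : ι → Subgroup G) (X : Set G) :
    SimpleGraph G :=
  cayleyGraph G (X ∪ ⋃ i, (H i : Set G))

/-- `G` is weakly hyperbolic relative to the collection of subgroups `H i` if there is a
finite relative generating set `X` of `G` with respect to the `H i` such that the
corresponding relative Cayley graph is hyperbolic. -/
def IsWeaklyRelativelyHyperbolic (G : Type*) [Group G] {ι : Type*} (H : ι → Subgroup G) :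
    Prop :=
  ∃ X : Set G, X.Finite ∧ IsRelGenSet H X ∧ (relCayleyGraph G H X).IsHyperbolic

/-! The relative Cayley graphs of `G` for the generating sets `X ∪ A ∪ B ∪ C` and
`X ∪ {g} ∪ A ∪ C` are bi-Lipschitz equivalent through the identity of `G`: an element
`g a g⁻¹` of `B` is joined to `1` by the path `1, g, g a, g a g⁻¹`, and `g` has bounded length
in the first graph. Hyperbolicity of graphs is invariant under such an equivalence, by the Morse
lemma: in a hyperbolic graph, a quasi-geodesic stays uniformly close to any geodesic with the
same endpoints, because geodesics diverge exponentially. -/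

lemma mul_le_mul_self_add_two_pow (a n : ℕ) : a * n ≤ a * a + 2 ^ n := by
  induction n with
  | zero => simp
  | succ n ih =>
    rcases le_or_gt a (2 ^ n) with h | h
    · rw [pow_succ]; nlinarith
    · calc a * (n + 1) ≤ a * a := Nat.mul_le_mul_left a (Nat.lt_two_pow_self.trans h)
        _ ≤ a * a + 2 ^ (n + 1) := Nat.le_add_right _ _

lemma le_of_le_mul_clog_mul {a b c D : ℕ} (h : D ≤ a * Nat.clog 2 (c * D) + b) :
    D ≤ 2 * (a * Nat.clog 2 c + a + b) + 4 * a ^ 2 := by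
  rcases Nat.eq_zero_or_pos D with rfl | hD
  · exact Nat.zero_le _
  have hclog : Nat.clog 2 (c * D) ≤ Nat.clog 2 c + (Nat.log 2 D + 1) := by
    refine Nat.clog_le_of_le_pow ?_
    rw [pow_add]
    exact Nat.mul_le_mul (Nat.le_pow_clog one_lt_two c)
      (Nat.lt_pow_succ_log_self one_lt_two D).le
  have hlog := mul_le_mul_self_add_two_pow (2 * a) (Nat.log 2 D)
  have hpow : 2 ^ Nat.log 2 D ≤ D := Nat.pow_log_le_self 2 hD.ne'
  nlinarith

lemma exists_le_and_le_add_of_succ_le_add {I : ℕ → ℕ} {c t L : ℕ} (h0 : I 0 ≤ t)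
    (hL : t ≤ I L) (hstep : ∀ s < L, I (s + 1) ≤ I s + c) :
    ∃ s ≤ L, I s ≤ t ∧ t ≤ I s + c := by
  induction L with
  | zero => exact ⟨0, le_rfl, h0, hL.trans (Nat.le_add_right _ _)⟩
  | succ L ih =>
    by_cases h : t ≤ I L
    · obtain ⟨s, hs, hst⟩ := ih h fun s hs => hstep s (by omega)
      exact ⟨s, by omega, hst⟩
    · exact ⟨L, by omega, by omega, hL.trans (hstep L (by omega))⟩

namespace SimpleGraph

variable {V : Type*} {Γ : SimpleGraph V} {u v : V}

namespace Walk

def segment (p : Γ.Walk u v) {i j : ℕ} (hij : i ≤ j) : Γ.Walk (p.getVert i) (p.getVert j) :=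
  ((p.drop i).take (j - i)).copy rfl (by rw [drop_getVert, Nat.add_sub_cancel' hij])

variable (p : Γ.Walk u v) {i j : ℕ}

lemma length_segment_le (hij : i ≤ j) : (p.segment hij).length ≤ j - i := by
  simp [segment]

lemma length_segment (hij : i ≤ j) (hj : j ≤ p.length) : (p.segment hij).length = j - i := by
  simp [segment]; omega

lemma isSubwalk_segment (hij : i ≤ j) : (p.segment hij).IsSubwalk p := by
  simpa [segment] using (((p.drop i).isSubwalk_take (j - i)).trans (p.isSubwalk_drop i)).copy
    rfl (by rw [drop_getVert, Nat.add_sub_cancel' hij]) rfl rfl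

lemma getVert_mem_support_segment (hij : i ≤ j) {s : ℕ} (hi : i ≤ s) (hj : s ≤ j) :
    p.getVert s ∈ (p.segment hij).support := by
  have : (p.segment hij).getVert (s - i) = p.getVert s := by
    simp [segment, Nat.min_eq_right (Nat.sub_le_sub_right hj i), Nat.add_sub_cancel' hi]
  exact this ▸ getVert_mem_support _ _

lemma dist_getVert_le (hij : i ≤ j) : Γ.dist (p.getVert i) (p.getVert j) ≤ j - i :=
  (dist_le _).trans (p.length_segment_le hij)

lemma dist_le_length_of_mem_support {x : V} (hx : x ∈ p.support) : Γ.dist u x ≤ p.length := by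
  classical exact (dist_le _).trans (p.length_takeUntil_le_length hx)

end Walk

open Walk

lemma IsGeodesic.copy {u' v' : V} {p : Γ.Walk u v} (hp : Γ.IsGeodesic p) (hu : u = u')
    (hv : v = v') : Γ.IsGeodesic (p.copy hu hv) := by
  subst hu hv; simpa using hp

lemma IsGeodesic.segment {p : Γ.Walk u v} (hp : Γ.IsGeodesic p) {i j : ℕ} (hij : i ≤ j) :
    Γ.IsGeodesic (p.segment hij) :=
  length_eq_dist_of_subwalk hp (p.isSubwalk_segment hij)

lemma IsGeodesic.dist_getVert {p : Γ.Walk u v} (hp : Γ.IsGeodesic p) {i j : ℕ} (hij : i ≤ j)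
    (hj : j ≤ p.length) : Γ.dist (p.getVert i) (p.getVert j) = j - i :=
  (hp.segment hij).symm.trans (p.length_segment hij hj)

lemma IsGeodesic.le_dist_getVert_sub_or_eq_start {p : Γ.Walk u v} (hp : Γ.IsGeodesic p)
    {s : ℕ} (hs : s ≤ p.length) (r : ℕ) :
    r ≤ Γ.dist (p.getVert s) (p.getVert (s - r)) ∨ p.getVert (s - r) = u := by
  by_cases h : r ≤ s
  · left; rw [dist_comm, hp.dist_getVert (by omega) hs]; omega
  · right; rw [show s - r = 0 by omega, getVert_zero]

lemma IsGeodesic.le_dist_getVert_min_add_or_eq_end {p : Γ.Walk u v} (hp : Γ.IsGeodesic p)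
    (s r : ℕ) :
    r ≤ Γ.dist (p.getVert s) (p.getVert (min (s + r) p.length)) ∨
      p.getVert (min (s + r) p.length) = v := by
  by_cases h : s + r ≤ p.length
  · left; rw [hp.dist_getVert (by omega) (by omega)]; omega
  · right; rw [min_eq_right (by omega), getVert_length]

def IsThin (Γ : SimpleGraph V) (δ : ℕ) : Prop :=
  ∀ (u v w : V) (p : Γ.Walk u v) (q : Γ.Walk v w) (r : Γ.Walk u w),
    Γ.IsGeodesic p → Γ.IsGeodesic q → Γ.IsGeodesic r →
    ∀ x ∈ r.support, ∃ y, (y ∈ p.support ∨ y ∈ q.support) ∧ Γ.dist x y ≤ δ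

lemma isHyperbolic_iff_exists_isThin : Γ.IsHyperbolic ↔ ∃ δ, Γ.IsThin δ := Iff.rfl

theorem IsThin.exists_mem_support_dist_le {δ : ℕ} (hδ : Γ.IsThin δ) (hΓ : Γ.Connected)
    (n : ℕ) (p : Γ.Walk u v) (hp : p.length ≤ 2 ^ n) {γ : Γ.Walk u v} (hγ : Γ.IsGeodesic γ)
    {x : V} (hx : x ∈ γ.support) : ∃ y ∈ p.support, Γ.dist x y ≤ δ * n + 1 := by
  induction n generalizing u v x with
  | zero =>
    have hγp : γ.length ≤ p.length := hγ ▸ dist_le p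
    have := γ.dist_le_length_of_mem_support hx
    refine ⟨u, p.start_mem_support, ?_⟩
    rw [dist_comm]
    simp only [pow_zero] at hp
    omega
  | succ n ih =>
    -- Cut `p` at its vertex of index `2 ^ n`: by thinness `x` is `δ`-close to a geodesic
    -- from an endpoint to that vertex, handled by induction with the corresponding piece of `p`.
    obtain ⟨γ₁, hγ₁⟩ := hΓ.exists_walk_length_eq_dist u (p.getVert (2 ^ n))
    obtain ⟨γ₂, hγ₂⟩ := hΓ.exists_walk_length_eq_dist (p.getVert (2 ^ n)) v
    obtain ⟨y, hy, hxy⟩ := hδ _ _ _ γ₁ γ₂ γ hγ₁ hγ₂ hγ x hx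
    obtain ⟨z, hz, hyz⟩ : ∃ z ∈ p.support, Γ.dist y z ≤ δ * n + 1 := by
      rcases hy with hy | hy
      · obtain ⟨z, hz, hyz⟩ := ih (p.take (2 ^ n)) (by simp) hγ₁ hy
        exact ⟨z, (p.isSubwalk_take _).support_subset hz, hyz⟩
      · obtain ⟨z, hz, hyz⟩ := ih (p.drop (2 ^ n)) (by rw [pow_succ] at hp; simp; omega) hγ₂ hy
        exact ⟨z, (p.isSubwalk_drop _).support_subset hz, hyz⟩
    refine ⟨z, hz, (hΓ.dist_triangle (v := y)).trans ?_⟩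
    rw [mul_add_one]
    omega

/-- The vertices `f 0, …, f N` of a `k`-quasi-geodesic; as `j - i` is truncated,
`sub_le_mul_dist` says `|i - j| ≤ k d(f i, f j)`. -/
structure IsQuasiGeodesicChain (Γ : SimpleGraph V) (k N : ℕ) (f : ℕ → V) : Prop where
  dist_succ_le : ∀ i < N, Γ.dist (f i) (f (i + 1)) ≤ k
  sub_le_mul_dist : ∀ i j, j ≤ N → j - i ≤ k * Γ.dist (f i) (f j)

/-- The bound that `le_of_le_mul_clog_mul` derives from `D ≤ δ ⌈log₂ (8 k² D)⌉ + (k + 1)`. -/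
def morseConst (δ k : ℕ) : ℕ := 2 * (δ * Nat.clog 2 (8 * k ^ 2) + δ + (k + 1)) + 4 * δ ^ 2

variable {f : ℕ → V} {k N δ : ℕ}

lemma Connected.exists_walk_through (hΓ : Γ.Connected)
    (hf : ∀ i < N, Γ.dist (f i) (f (i + 1)) ≤ k) {a b : ℕ} (hab : a ≤ b) (hb : b ≤ N) :
    ∃ W : Γ.Walk (f a) (f b), W.length ≤ k * (b - a) ∧
      ∀ w ∈ W.support, ∃ t ≤ N, Γ.dist w (f t) ≤ k := by
  induction b, hab using Nat.le_induction with
  | base => exact ⟨nil, by simp, fun w hw => ⟨a, by omega, by simp_all⟩⟩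
  | succ b hab ih =>
    obtain ⟨W, hW, hW_near⟩ := ih (by omega)
    obtain ⟨E, hE⟩ := hΓ.exists_walk_length_eq_dist (f b) (f (b + 1))
    have hEk : E.length ≤ k := hE ▸ hf b (by omega)
    refine ⟨W.append E, ?_, fun w hw => ?_⟩
    · rw [length_append, Nat.sub_add_comm hab, mul_add_one]
      omega
    · rcases (mem_support_append_iff _ _).mp hw with hw | hw
      · exact hW_near w hw
      · exact ⟨b, by omega, dist_comm.trans_le ((E.dist_le_length_of_mem_support hw).trans hEk)⟩

lemma Connected.exists_far_walk_to (hΓ : Γ.Connected) {D : ℕ} {x₀ y : V}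
    (hfar : ∀ i ≤ N, D ≤ Γ.dist x₀ (f i)) (hy : ∃ i ≤ N, Γ.dist y (f i) ≤ D)
    (hy' : 2 * D ≤ Γ.dist x₀ y ∨ ∃ i ≤ N, f i = y) :
    ∃ i ≤ N, ∃ W : Γ.Walk y (f i), W.length ≤ D ∧ ∀ w ∈ W.support, D ≤ Γ.dist x₀ w := by
  rcases hy' with hy' | ⟨i, hi, rfl⟩
  · obtain ⟨i, hi, hyi⟩ := hy
    obtain ⟨W, hW⟩ := hΓ.exists_walk_length_eq_dist y (f i)
    refine ⟨i, hi, W, hW ▸ hyi, fun w hw => ?_⟩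
    have hyw := W.dist_le_length_of_mem_support hw
    have := hΓ.dist_triangle (u := x₀) (v := w) (w := y)
    rw [dist_comm (u := w)] at this
    omega
  · refine ⟨i, hi, nil, by simp, fun w hw => ?_⟩
    rw [support_nil, List.mem_singleton] at hw
    exact hw ▸ hfar i hi

namespace IsQuasiGeodesicChain

lemma dist_le_mul_sub (hf : Γ.IsQuasiGeodesicChain k N f) (hΓ : Γ.Connected) {a b : ℕ}
    (hab : a ≤ b) (hb : b ≤ N) : Γ.dist (f a) (f b) ≤ k * (b - a) :=
  have ⟨W, hW, _⟩ := hΓ.exists_walk_through hf.dist_succ_le hab hb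
  (dist_le W).trans hW

lemma exists_walk (hf : Γ.IsQuasiGeodesicChain k N f) (hΓ : Γ.Connected) {a b : ℕ}
    (ha : a ≤ N) (hb : b ≤ N) :
    ∃ W : Γ.Walk (f a) (f b), W.length ≤ k * (k * Γ.dist (f a) (f b)) ∧
      ∀ w ∈ W.support, ∃ t ≤ N, Γ.dist w (f t) ≤ k := by
  rcases le_total a b with hab | hba
  · obtain ⟨W, hW, hW_near⟩ := hΓ.exists_walk_through hf.dist_succ_le hab hb
    exact ⟨W, hW.trans (Nat.mul_le_mul_left k (hf.sub_le_mul_dist a b hb)), hW_near⟩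
  · obtain ⟨W, hW, hW_near⟩ := hΓ.exists_walk_through hf.dist_succ_le hba ha
    refine ⟨W.reverse, ?_, fun w hw => hW_near w (by simpa using hw)⟩
    rw [length_reverse, dist_comm]
    exact hW.trans (Nat.mul_le_mul_left k (hf.sub_le_mul_dist b a ha))

/-- Go from `y` to the chain, along it, and on to `z`. As `y` and `z` are `2 D`-far from `x₀` or
on the chain, and the chain is `D`-far from `x₀`, this walk stays `(D - k)`-far from `x₀`. -/
lemma exists_far_walk (hf : Γ.IsQuasiGeodesicChain k N f) (hΓ : Γ.Connected) (hk : 1 ≤ k)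
    {D : ℕ} {x₀ y z : V} (hfar : ∀ i ≤ N, D ≤ Γ.dist x₀ (f i))
    (hy : ∃ i ≤ N, Γ.dist y (f i) ≤ D) (hy' : 2 * D ≤ Γ.dist x₀ y ∨ ∃ i ≤ N, f i = y)
    (hz : ∃ i ≤ N, Γ.dist z (f i) ≤ D) (hz' : 2 * D ≤ Γ.dist x₀ z ∨ ∃ i ≤ N, f i = z)
    (hx₀y : Γ.dist x₀ y ≤ 2 * D) (hx₀z : Γ.dist x₀ z ≤ 2 * D) :
    ∃ π : Γ.Walk y z, π.length ≤ 8 * k ^ 2 * D ∧ ∀ w ∈ π.support, D ≤ Γ.dist x₀ w + k := by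
  obtain ⟨i, hi, Wy, hWy, hWy_far⟩ := hΓ.exists_far_walk_to hfar hy hy'
  obtain ⟨j, hj, Wz, hWz, hWz_far⟩ := hΓ.exists_far_walk_to hfar hz hz'
  obtain ⟨Wm, hWm, hWm_near⟩ := hf.exists_walk hΓ hi hj
  have hij : Γ.dist (f i) (f j) ≤ 6 * D := by
    have h1 := hΓ.dist_triangle (u := f i) (v := y) (w := f j)
    have h2 := hΓ.dist_triangle (u := y) (v := x₀) (w := f j)
    have h3 := hΓ.dist_triangle (u := x₀) (v := z) (w := f j)
    have := dist_le Wy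
    have := dist_le Wz
    have c1 : Γ.dist (f i) y = Γ.dist y (f i) := dist_comm
    have c2 : Γ.dist y x₀ = Γ.dist x₀ y := dist_comm
    omega
  refine ⟨Wy.append (Wm.append Wz.reverse), ?_, fun w hw => ?_⟩
  · have : k * (k * Γ.dist (f i) (f j)) ≤ 6 * k ^ 2 * D :=
      calc k * (k * Γ.dist (f i) (f j)) ≤ k * (k * (6 * D)) := by gcongr
        _ = 6 * k ^ 2 * D := by ring
    have : D ≤ k ^ 2 * D := Nat.le_mul_of_pos_left D (by positivity)
    simp only [length_append, length_reverse]
    linarith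
  · simp only [mem_support_append_iff, support_reverse, List.mem_reverse] at hw
    rcases hw with hw | hw | hw
    · exact (hWy_far w hw).trans (Nat.le_add_right _ _)
    · obtain ⟨t, ht, hwt⟩ := hWm_near w hw
      have := hΓ.dist_triangle (u := x₀) (v := w) (w := f t)
      have := hfar t ht
      omega
    · exact (hWz_far w hw).trans (Nat.le_add_right _ _)

/-- The detour `π` of `exists_far_walk` around `x₀ = γ.getVert s`, leaving `γ` at distance `2 D`
on both sides of `x₀` (or at an endpoint of `γ`). -/
lemma exists_detour (hf : Γ.IsQuasiGeodesicChain k N f) (hΓ : Γ.Connected) (hk : 1 ≤ k)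
    {γ : Γ.Walk (f 0) (f N)} (hγ : Γ.IsGeodesic γ) {D : ℕ}
    (hnear : ∀ x ∈ γ.support, ∃ i ≤ N, Γ.dist x (f i) ≤ D) {s : ℕ} (hs : s ≤ γ.length)
    (hfar : ∀ i ≤ N, D ≤ Γ.dist (γ.getVert s) (f i)) :
    ∃ (y z : V) (π γ' : Γ.Walk y z), Γ.IsGeodesic γ' ∧ γ.getVert s ∈ γ'.support ∧
      π.length ≤ 8 * k ^ 2 * D ∧ ∀ w ∈ π.support, D ≤ Γ.dist (γ.getVert s) w + k := by
  have hy := (hγ.le_dist_getVert_sub_or_eq_start hs (2 * D)).imp_right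
    fun h => (⟨0, Nat.zero_le N, h.symm⟩ : ∃ i ≤ N, f i = _)
  have hz := (hγ.le_dist_getVert_min_add_or_eq_end s (2 * D)).imp_right
    fun h => (⟨N, le_rfl, h.symm⟩ : ∃ i ≤ N, f i = _)
  have hx₀y := γ.dist_getVert_le (show s - 2 * D ≤ s by omega)
  have hx₀z := γ.dist_getVert_le (show s ≤ min (s + 2 * D) γ.length by omega)
  rw [dist_comm] at hx₀y
  obtain ⟨π, hπ, hπ_far⟩ := hf.exists_far_walk hΓ hk hfar (hnear _ (γ.getVert_mem_support _)) hy
    (hnear _ (γ.getVert_mem_support _)) hz (hx₀y.trans (by omega)) (hx₀z.trans (by omega))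
  exact ⟨_, _, π, γ.segment (show s - 2 * D ≤ min (s + 2 * D) γ.length by omega), hγ.segment _,
    γ.getVert_mem_support_segment _ (by omega) (by omega), hπ, hπ_far⟩

/-- By exponential divergence the detour of `exists_detour` comes within
`δ ⌈log₂ (8 k² D)⌉ + 1` of `x₀`, which bounds `D` by a logarithm of itself. -/
lemma le_morseConst (hf : Γ.IsQuasiGeodesicChain k N f) (hΓ : Γ.Connected) (hδ : Γ.IsThin δ)
    (hk : 1 ≤ k) {γ : Γ.Walk (f 0) (f N)} (hγ : Γ.IsGeodesic γ) {D : ℕ}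
    (hnear : ∀ x ∈ γ.support, ∃ i ≤ N, Γ.dist x (f i) ≤ D) {x₀ : V} (hx₀ : x₀ ∈ γ.support)
    (hfar : ∀ i ≤ N, D ≤ Γ.dist x₀ (f i)) : D ≤ morseConst δ k := by
  obtain ⟨s, rfl, hs⟩ := mem_support_iff_exists_getVert.mp hx₀
  obtain ⟨y, z, π, γ', hγ', hx₀', hπ, hπ_far⟩ := hf.exists_detour hΓ hk hγ hnear hs hfar
  obtain ⟨w, hw, hdw⟩ := hδ.exists_mem_support_dist_le hΓ (Nat.clog 2 (8 * k ^ 2 * D)) π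
    (hπ.trans (Nat.le_pow_clog one_lt_two _)) hγ' hx₀'
  have := hπ_far w hw
  refine le_of_le_mul_clog_mul (c := 8 * k ^ 2) ?_
  omega

theorem exists_dist_le_morseConst (hf : Γ.IsQuasiGeodesicChain k N f) (hΓ : Γ.Connected)
    (hδ : Γ.IsThin δ) (hk : 1 ≤ k) {γ : Γ.Walk (f 0) (f N)} (hγ : Γ.IsGeodesic γ) {x : V}
    (hx : x ∈ γ.support) : ∃ i ≤ N, Γ.dist x (f i) ≤ morseConst δ k := by
  classical
  -- Take for `D` the largest distance from a vertex of `γ` to the chain.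
  choose! ι hιN hιmin using fun x => (Finset.range (N + 1)).exists_min_image
    (fun i => Γ.dist x (f i)) ⟨0, by simp⟩
  simp only [Finset.mem_range, Nat.lt_succ_iff] at hιN hιmin
  obtain ⟨x₀, hx₀, hmax⟩ := γ.support.toFinset.exists_max_image (fun x => Γ.dist x (f (ι x)))
    ⟨_, List.mem_toFinset.mpr γ.start_mem_support⟩
  simp only [List.mem_toFinset] at hx₀ hmax
  have hD := hf.le_morseConst hΓ hδ hk hγ (fun x hx => ⟨ι x, hιN x, hmax x hx⟩) hx₀ (hιmin x₀)
  exact ⟨ι x, hιN x, (hmax x hx).trans hD⟩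

lemma exists_index_dist_le_morseConst (hf : Γ.IsQuasiGeodesicChain k N f) (hΓ : Γ.Connected)
    (hδ : Γ.IsThin δ) (hk : 1 ≤ k) {γ : Γ.Walk (f 0) (f N)} (hγ : Γ.IsGeodesic γ) :
    ∃ I : ℕ → ℕ, I 0 = 0 ∧ I γ.length = N ∧
      ∀ s, I s ≤ N ∧ Γ.dist (γ.getVert s) (f (I s)) ≤ morseConst δ k := by
  have hN : N ≤ k * γ.length := (hγ : γ.length = _) ▸ hf.sub_le_mul_dist 0 N le_rfl
  choose I hIN hI using fun s =>
    hf.exists_dist_le_morseConst hΓ hδ hk hγ (γ.getVert_mem_support s)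
  refine ⟨fun s => if s = 0 then 0 else if γ.length ≤ s then N else I s, by simp, ?_,
    fun s => ?_⟩
  · rcases Nat.eq_zero_or_pos γ.length with h | h
    · simp only [h, mul_zero, nonpos_iff_eq_zero] at hN ⊢
      simp [hN]
    · simp [h.ne']
  · dsimp only
    split_ifs with h0 hL
    · simp [h0]
    · simp [getVert_of_length_le _ hL]
    · exact ⟨hIN s, hI s⟩

/-- Consecutive vertices of `γ` project to indices at most `k (2 morseConst δ k + 1)` apart, so
every index `t` lies at most that far above the projection of some vertex. -/
theorem exists_mem_support_dist_le (hf : Γ.IsQuasiGeodesicChain k N f) (hΓ : Γ.Connected)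
    (hδ : Γ.IsThin δ) (hk : 1 ≤ k) {γ : Γ.Walk (f 0) (f N)} (hγ : Γ.IsGeodesic γ) {t : ℕ}
    (ht : t ≤ N) :
    ∃ x ∈ γ.support, Γ.dist (f t) x ≤ k * (k * (2 * morseConst δ k + 1)) + morseConst δ k := by
  obtain ⟨I, hI0, hIL, hI⟩ := hf.exists_index_dist_le_morseConst hΓ hδ hk hγ
  set M := morseConst δ k
  have hstep : ∀ s, I (s + 1) ≤ I s + k * (2 * M + 1) := by
    intro s
    have h1 := hΓ.dist_triangle (u := f (I s)) (v := γ.getVert s) (w := f (I (s + 1)))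
    have h2 := hΓ.dist_triangle (u := γ.getVert s) (v := γ.getVert (s + 1)) (w := f (I (s + 1)))
    have h3 := γ.dist_getVert_le (show s ≤ s + 1 by omega)
    have c : Γ.dist (f (I s)) (γ.getVert s) = Γ.dist (γ.getVert s) (f (I s)) := dist_comm
    have hd : Γ.dist (f (I s)) (f (I (s + 1))) ≤ 2 * M + 1 := by
      have := (hI s).2
      have := (hI (s + 1)).2
      omega
    have := hf.sub_le_mul_dist (I s) (I (s + 1)) (hI (s + 1)).1
    have := Nat.mul_le_mul_left k hd
    omega
  obtain ⟨s, -, hst, hts⟩ := exists_le_and_le_add_of_succ_le_add (I := I) (t := t)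
    (by simp [hI0]) (hIL ▸ ht) (fun s _ => hstep s)
  refine ⟨γ.getVert s, γ.getVert_mem_support s, ?_⟩
  have hts' : k * (t - I s) ≤ k * (k * (2 * M + 1)) := Nat.mul_le_mul_left k (by omega)
  calc Γ.dist (f t) (γ.getVert s)
      ≤ Γ.dist (f (I s)) (f t) + Γ.dist (γ.getVert s) (f (I s)) := by
        rw [dist_comm (u := f (I s)), dist_comm (u := γ.getVert s)]
        exact hΓ.dist_triangle
    _ ≤ k * (k * (2 * M + 1)) + M :=
        add_le_add ((hf.dist_le_mul_sub hΓ hst ht).trans hts') (hI s).2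

end IsQuasiGeodesicChain

section BiLipschitz

variable {Γ₁ Γ₂ : SimpleGraph V}

lemma IsGeodesic.isQuasiGeodesicChain {p : Γ₂.Walk u v} (hp : Γ₂.IsGeodesic p)
    (h₁₂ : ∀ x y, Γ₁.dist x y ≤ k * Γ₂.dist x y) (h₂₁ : ∀ x y, Γ₂.dist x y ≤ k * Γ₁.dist x y) :
    Γ₁.IsQuasiGeodesicChain k p.length p.getVert where
  dist_succ_le i _ := (h₁₂ _ _).trans <| by
    simpa using Nat.mul_le_mul_left k (p.dist_getVert_le (show i ≤ i + 1 by omega))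
  sub_le_mul_dist i j hj := by
    rcases le_total i j with hij | hji
    · rw [← hp.dist_getVert hij hj]
      exact h₂₁ _ _
    · simp [Nat.sub_eq_zero_of_le hji]

theorem IsThin.exists_mem_support_dist_le_of_mem_geodesic (hδ : Γ₁.IsThin δ)
    (h₁ : Γ₁.Connected) (hk : 1 ≤ k) (h₁₂ : ∀ x y, Γ₁.dist x y ≤ k * Γ₂.dist x y)
    (h₂₁ : ∀ x y, Γ₂.dist x y ≤ k * Γ₁.dist x y) {p : Γ₂.Walk u v} (hp : Γ₂.IsGeodesic p)
    {P : Γ₁.Walk u v} (hP : Γ₁.IsGeodesic P) {y : V} (hy : y ∈ P.support) :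
    ∃ z ∈ p.support, Γ₁.dist y z ≤ morseConst δ k := by
  obtain ⟨i, -, hi⟩ := (hp.isQuasiGeodesicChain h₁₂ h₂₁).exists_dist_le_morseConst h₁ hδ hk
    (hP.copy p.getVert_zero.symm p.getVert_length.symm) (by rwa [support_copy])
  exact ⟨_, p.getVert_mem_support i, hi⟩

theorem IsThin.exists_mem_geodesic_dist_le_of_mem_support (hδ : Γ₁.IsThin δ)
    (h₁ : Γ₁.Connected) (hk : 1 ≤ k) (h₁₂ : ∀ x y, Γ₁.dist x y ≤ k * Γ₂.dist x y)
    (h₂₁ : ∀ x y, Γ₂.dist x y ≤ k * Γ₁.dist x y) {p : Γ₂.Walk u v} (hp : Γ₂.IsGeodesic p)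
    {P : Γ₁.Walk u v} (hP : Γ₁.IsGeodesic P) {x : V} (hx : x ∈ p.support) :
    ∃ z ∈ P.support, Γ₁.dist x z ≤ k * (k * (2 * morseConst δ k + 1)) + morseConst δ k := by
  obtain ⟨t, rfl, ht⟩ := mem_support_iff_exists_getVert.mp hx
  simpa using (hp.isQuasiGeodesicChain h₁₂ h₂₁).exists_mem_support_dist_le h₁ hδ hk
    (hP.copy p.getVert_zero.symm p.getVert_length.symm) ht

theorem IsHyperbolic.of_dist_le_mul (hyp : Γ₁.IsHyperbolic) (h₁ : Γ₁.Connected) {k : ℕ}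
    (h₁₂ : ∀ x y, Γ₁.dist x y ≤ k * Γ₂.dist x y) (h₂₁ : ∀ x y, Γ₂.dist x y ≤ k * Γ₁.dist x y) :
    Γ₂.IsHyperbolic := by
  wlog hk : 1 ≤ k generalizing k
  · exact this (k := k + 1) (fun x y => (h₁₂ x y).trans (by gcongr; omega))
      (fun x y => (h₂₁ x y).trans (by gcongr; omega)) (by omega)
  obtain ⟨δ, hδ⟩ := isHyperbolic_iff_exists_isThin.mp hyp
  refine isHyperbolic_iff_exists_isThin.mpr ⟨k * (k * (k * (2 * morseConst δ k + 1)) +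
    morseConst δ k + δ + morseConst δ k), fun u v w p q r hp hq hr x hx => ?_⟩
  obtain ⟨P, hP⟩ := h₁.exists_walk_length_eq_dist u v
  obtain ⟨Q, hQ⟩ := h₁.exists_walk_length_eq_dist v w
  obtain ⟨R, hR⟩ := h₁.exists_walk_length_eq_dist u w
  obtain ⟨x', hx', hxx'⟩ := hδ.exists_mem_geodesic_dist_le_of_mem_support h₁ hk h₁₂ h₂₁ hr hR hx
  obtain ⟨y', hy', hx'y'⟩ := hδ u v w P Q R hP hQ hR x' hx'
  obtain ⟨y, hy, hy'y⟩ :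
      ∃ y, (y ∈ p.support ∨ y ∈ q.support) ∧ Γ₁.dist y' y ≤ morseConst δ k := by
    rcases hy' with hy' | hy'
    · obtain ⟨y, hy, h⟩ := hδ.exists_mem_support_dist_le_of_mem_geodesic h₁ hk h₁₂ h₂₁ hp hP hy'
      exact ⟨y, Or.inl hy, h⟩
    · obtain ⟨y, hy, h⟩ := hδ.exists_mem_support_dist_le_of_mem_geodesic h₁ hk h₁₂ h₂₁ hq hQ hy'
      exact ⟨y, Or.inr hy, h⟩
  refine ⟨y, hy, (h₂₁ _ _).trans (Nat.mul_le_mul_left k ?_)⟩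
  have := h₁.dist_triangle (u := x) (v := x') (w := y)
  have := h₁.dist_triangle (u := x') (v := y') (w := y)
  omega

lemma Connected.dist_le_mul_dist_of_adj (h₁ : Γ₁.Connected) (h₂ : Γ₂.Connected)
    (h : ∀ x y, Γ₁.Adj x y → Γ₂.dist x y ≤ k) (u v : V) : Γ₂.dist u v ≤ k * Γ₁.dist u v := by
  obtain ⟨W, hW⟩ := h₁.exists_walk_length_eq_dist u v
  rw [← hW]
  clear hW
  induction W with
  | nil => simp
  | @cons a b c hab W ih =>
    rw [length_cons, mul_add_one, add_comm]
    exact h₂.dist_triangle.trans (add_le_add (h a b hab) ih)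

end BiLipschitz

end SimpleGraph

section Cayley

open SimpleGraph

variable {G : Type*} [Group G] {S T : Set G}

def cayleyGraphMulLeft (S : Set G) (a : G) : cayleyGraph G S →g cayleyGraph G S where
  toFun := (a * ·)
  map_rel' {u v} h := by simpa [cayleyGraph, mul_assoc] using h

lemma cayleyGraph_dist_mul_left_le (hS : (cayleyGraph G S).Connected) (a u v : G) :
    (cayleyGraph G S).dist (a * u) (a * v) ≤ (cayleyGraph G S).dist u v := by
  obtain ⟨W, hW⟩ := hS.exists_walk_length_eq_dist u v
  exact (dist_le (W.map (cayleyGraphMulLeft S a))).trans_eq ((Walk.length_map _ _).trans hW)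

lemma cayleyGraph_adj_mul_of_mem {s : G} (hs : s ∈ S) (hs1 : s ≠ 1) (u : G) :
    (cayleyGraph G S).Adj u (u * s) :=
  ⟨by simpa using hs1, Or.inl (by simpa using hs)⟩

lemma cayleyGraph_dist_mul_le_one {s : G} (hs : s ∈ S) (u : G) :
    (cayleyGraph G S).dist u (u * s) ≤ 1 := by
  rcases eq_or_ne s 1 with rfl | hs1
  · simp
  · exact (dist_eq_one_iff_adj.mpr (cayleyGraph_adj_mul_of_mem hs hs1 u)).le

lemma cayleyGraph_reachable_mul {s : G} (hs : s ∈ S) (u : G) :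
    (cayleyGraph G S).Reachable u (u * s) := by
  rcases eq_or_ne s 1 with rfl | hs1
  · simp
  · exact (cayleyGraph_adj_mul_of_mem hs hs1 u).reachable

lemma cayleyGraph_connected (hS : Subgroup.closure S = ⊤) : (cayleyGraph G S).Connected := by
  have h1 (x : G) : (cayleyGraph G S).Reachable 1 x := by
    induction hS ▸ Subgroup.mem_top x using Subgroup.closure_induction_right with
    | one => rfl
    | mul_right x _ s hs ih => exact ih.trans (cayleyGraph_reachable_mul hs x)
    | mul_inv_cancel x _ s hs ih =>
      exact ih.trans (by simpa using (cayleyGraph_reachable_mul hs (x * s⁻¹)).symm)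
  exact ⟨fun x y => (h1 x).symm.trans (h1 y)⟩

lemma cayleyGraph_dist_le_mul_dist (hS : (cayleyGraph G S).Connected)
    (hT : (cayleyGraph G T).Connected) {k : ℕ} (h : ∀ s ∈ S, (cayleyGraph G T).dist 1 s ≤ k)
    (u v : G) : (cayleyGraph G T).dist u v ≤ k * (cayleyGraph G S).dist u v := by
  refine hS.dist_le_mul_dist_of_adj hT (fun x y hxy => ?_) u v
  rcases hxy.2 with hs | hs
  · simpa using (cayleyGraph_dist_mul_left_le hT x 1 (x⁻¹ * y)).trans (h _ hs)
  · rw [dist_comm]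
    simpa using (cayleyGraph_dist_mul_left_le hT y 1 (y⁻¹ * x)).trans (h _ hs)

theorem cayleyGraph_isHyperbolic_of_dist_le (hS : Subgroup.closure S = ⊤)
    (hT : Subgroup.closure T = ⊤) {k : ℕ} (hST : ∀ s ∈ S, (cayleyGraph G T).dist 1 s ≤ k)
    (hTS : ∀ t ∈ T, (cayleyGraph G S).dist 1 t ≤ k) (hyp : (cayleyGraph G S).IsHyperbolic) :
    (cayleyGraph G T).IsHyperbolic :=
  hyp.of_dist_le_mul (cayleyGraph_connected hS)
    (cayleyGraph_dist_le_mul_dist (cayleyGraph_connected hT) (cayleyGraph_connected hS) hTS)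
    (cayleyGraph_dist_le_mul_dist (cayleyGraph_connected hS) (cayleyGraph_connected hT) hST)

lemma cayleyGraph_dist_one_conj_le (hT : (cayleyGraph G T).Connected) {g a : G} (hg : g ∈ T)
    (ha : a ∈ T) : (cayleyGraph G T).dist 1 (g * a * g⁻¹) ≤ 3 := by
  have h1 := cayleyGraph_dist_mul_le_one hg 1
  have h2 := cayleyGraph_dist_mul_le_one ha g
  have h3 := cayleyGraph_dist_mul_le_one hg (g * a * g⁻¹)
  rw [one_mul] at h1
  rw [inv_mul_cancel_right, dist_comm] at h3
  have := hT.dist_triangle (u := 1) (v := g) (w := g * a * g⁻¹)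
  have := hT.dist_triangle (u := g) (v := g * a) (w := g * a * g⁻¹)
  omega

theorem isHyperbolic_cayleyGraph_insert_of_union_conj {U B : Set G} {g : G}
    (hB : ∀ b ∈ B, ∃ a ∈ U, b = g * a * g⁻¹) (hgen : Subgroup.closure (U ∪ B) = ⊤)
    (hyp : (cayleyGraph G (U ∪ B)).IsHyperbolic) :
    Subgroup.closure (insert g U) = ⊤ ∧ (cayleyGraph G (insert g U)).IsHyperbolic := by
  have hgen' : Subgroup.closure (insert g U) = ⊤ := by
    refine eq_top_iff.mpr (hgen ▸ (Subgroup.closure_le _).mpr ?_)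
    rintro s (hs | hs)
    · exact Subgroup.subset_closure (Set.mem_insert_of_mem g hs)
    · obtain ⟨a, ha, rfl⟩ := hB s hs
      have hg := Subgroup.subset_closure (Set.mem_insert g U)
      exact mul_mem (mul_mem hg (Subgroup.subset_closure (Set.mem_insert_of_mem g ha)))
        (inv_mem hg)
  refine ⟨hgen', cayleyGraph_isHyperbolic_of_dist_le hgen hgen'
    (k := (cayleyGraph G (U ∪ B)).dist 1 g + 3) (fun s hs => ?_) (fun t ht => ?_) hyp⟩
  · rcases hs with hs | hs
    · have := cayleyGraph_dist_mul_le_one (Set.mem_insert_of_mem g hs) 1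
      rw [one_mul] at this
      omega
    · obtain ⟨a, ha, rfl⟩ := hB s hs
      have := cayleyGraph_dist_one_conj_le (cayleyGraph_connected hgen') (Set.mem_insert g U)
        (Set.mem_insert_of_mem g ha)
      omega
  · rcases ht with rfl | ht
    · omega
    · have := cayleyGraph_dist_mul_le_one (Set.mem_union_left B ht) 1
      rw [one_mul] at this
      omega

lemma iUnion_coe_fin_cons {n : ℕ} (H : Subgroup G) (K : Fin n → Subgroup G) :
    ⋃ i, ((Fin.cons H K : Fin (n + 1) → Subgroup G) i : Set G) =
      (H : Set G) ∪ ⋃ i, (K i : Set G) := by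
  ext
  simp [Fin.exists_fin_succ]

end Cayley

/-- **Lemma (Osin, Lemma 3.4).** Suppose that a group `G` is weakly hyperbolic relative
to `{A, B, C 0, …, C (m-1)}`, where `A` and `B` are conjugate subgroups of `G`. Then `G`
is weakly hyperbolic relative to `{A, C 0, …, C (m-1)}`. -/
theorem weakly_relatively_hyperbolic_drop_conjugate {G : Type*} [Group G]
    (A B : Subgroup G) (g : G) (hconj : B = Subgroup.map (MulAut.conj g).toMonoidHom A)
    {m : ℕ} (C : Fin m → Subgroup G)
    (hG : IsWeaklyRelativelyHyperbolic G (Fin.cons A (Fin.cons B C))) :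
    IsWeaklyRelativelyHyperbolic G (Fin.cons A C) := by
  obtain ⟨X, hX, hgen, hyp⟩ := hG
  set U := X ∪ ⋃ i, ((Fin.cons A C : Fin (m + 1) → Subgroup G) i : Set G)
  have hS : X ∪ ⋃ i, ((Fin.cons A (Fin.cons B C) : Fin (m + 2) → Subgroup G) i : Set G) =
      U ∪ B := by
    simp only [U, iUnion_coe_fin_cons]
    ext
    simp only [Set.mem_union]
    tauto
  have hB : ∀ b ∈ (B : Set G), ∃ a ∈ U, b = g * a * g⁻¹ := by
    rw [hconj]
    rintro _ ⟨a, ha, rfl⟩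
    exact ⟨a, Or.inr (Set.mem_iUnion.mpr ⟨0, ha⟩), rfl⟩
  rw [IsRelGenSet, hS] at hgen
  rw [relCayleyGraph, hS] at hyp
  obtain ⟨hgen', hyp'⟩ := isHyperbolic_cayleyGraph_insert_of_union_conj hB hgen hyp
  exact ⟨insert g X, hX.insert g, by rwa [IsRelGenSet, Set.insert_union],
    by rwa [relCayleyGraph, Set.insert_union]⟩
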